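/- arXiv:1110.4355 — 4 statements merged into one kernel-verified Lean document; each statement's English description precedes it below -/
import Mathlib

section
/- Let Q be an m×m real symmetric positive definite matrix, F an arbitrary m×m real matrix, and let P₁, P₂ be m×m real symmetric matrices with P₁ ≻ P₂ ≻ 0 (i.e., P₁ − P₂ and P₂ are positive definite). Then det(F P₁ Fᵀ + Q) / det(P₁) < det(F P₂ Fᵀ + Q) / det(P₂). In other words, the ratio det(L(P))/det(P) for the Lyapunov update L(P) = F P Fᵀ + Q is strictly decreasing in P with respect to the Loewner order. -/
/-!
By the matrix determinant lemma, `det(F P Fᵀ + Q) / det P = det Q · det(P⁻¹ + Fᵀ Q⁻¹ F)`. Matrix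
inversion is strictly antitone on positive definite matrices, so `P₁⁻¹ ≺ P₂⁻¹`, and the
determinant is strictly monotone on positive definite matrices.
-/

open Matrix
open scoped MatrixOrder

lemma IsStrictlyPositive.one_lt_of_mem_spectrum_one_add {A : Type*} [Ring A] [PartialOrder A]
    [Algebra ℝ A] [NonnegSpectrumClass ℝ A] {a : A} (ha : IsStrictlyPositive a) {x : ℝ}
    (hx : x ∈ spectrum ℝ (1 + a)) : 1 < x := by
  rw [← map_one (algebraMap ℝ A), ← spectrum.singleton_add_eq] at hx
  obtain ⟨_, rfl, μ, hμ, rfl⟩ := hx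
  simpa using ha.spectrum_pos hμ

namespace Matrix

variable {n : Type*} [Fintype n] [DecidableEq n]

lemma det_mul_mul_transpose_add {m R : Type*} [Fintype m] [DecidableEq m] [CommRing R]
    (F : Matrix m n R) {P : Matrix n n R} {Q : Matrix m m R}
    (hP : IsUnit P.det) (hQ : IsUnit Q.det) :
    (F * P * Fᵀ + Q).det = Q.det * (P⁻¹ + Fᵀ * Q⁻¹ * F).det * P.det := by
  rw [add_comm, det_add_mul _ _ hQ, mul_assoc, ← det_mul, add_mul, nonsing_inv_mul _ hP]
  simp only [Matrix.mul_assoc]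

lemma inv_sub_inv_eq_inv_mul_mul_inv {R : Type*} [CommRing R] {A B : Matrix n n R}
    (hA : IsUnit A.det) (hB : IsUnit B.det) :
    B⁻¹ - A⁻¹ = A⁻¹ * ((A - B) + (A - B) * B⁻¹ * (A - B)) * A⁻¹ := by
  simp only [Matrix.mul_add, Matrix.add_mul, Matrix.mul_sub, Matrix.sub_mul, Matrix.mul_assoc,
    nonsing_inv_mul_cancel_left _ _ hA, mul_nonsing_inv _ hA, nonsing_inv_mul _ hA,
    nonsing_inv_mul _ hB, mul_nonsing_inv_cancel_left _ _ hB, Matrix.mul_one, Matrix.one_mul]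
  abel

lemma PosDef.inv_sub_inv {A B : Matrix n n ℝ} (hB : B.PosDef) (hAB : (A - B).PosDef) :
    (B⁻¹ - A⁻¹).PosDef := by
  have hA : A.PosDef := by simpa using hB.add hAB
  have hmid : ((A - B) + (A - B) * B⁻¹ * (A - B)).PosDef := by
    simpa only [hAB.1.eq] using
      hAB.add_posSemidef (hB.inv.posSemidef.conjTranspose_mul_mul_same (A - B))
  rw [inv_sub_inv_eq_inv_mul_mul_inv hA.det_pos.ne'.isUnit hB.det_pos.ne'.isUnit]
  simpa only [star_eq_conjTranspose, hA.inv.1.eq] using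
    (IsUnit.posDef_star_left_conjugate_iff (isUnit_nonsing_inv_iff.2 hA.isUnit)).2 hmid

lemma PosDef.one_lt_det_one_add [Nonempty n] {K : Matrix n n ℝ} (hK : K.PosDef) :
    1 < (1 + K).det := by
  have hH : (1 + K).IsHermitian := isHermitian_one.add hK.1
  have hlt (i : n) : 1 < hH.eigenvalues i :=
    (isStrictlyPositive_iff_posDef.2 hK).one_lt_of_mem_spectrum_one_add
      (hH.spectrum_real_eq_range_eigenvalues ▸ Set.mem_range_self i)
  rw [hH.det_eq_prod_eigenvalues, ← Finset.prod_const_one]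
  exact Finset.prod_lt_prod_of_nonempty (fun _ _ ↦ one_pos) (fun i _ ↦ hlt i) Finset.univ_nonempty

lemma PosDef.det_lt_det [Nonempty n] {X Y : Matrix n n ℝ} (hX : X.PosDef)
    (hXY : (Y - X).PosDef) : X.det < Y.det := by
  set S := CFC.sqrt (Y - X)
  have hS : S.PosDef := isStrictlyPositive_iff_posDef.1 (isStrictlyPositive_iff_posDef.2 hXY).sqrt
  have hY : Y = X + S * S := by
    rw [CFC.sqrt_mul_sqrt_self _ hXY.posSemidef.nonneg]
    abel
  -- `det Y = det X · det(1 + S X⁻¹ S)` by the matrix determinant lemma.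
  have hK : (S * X⁻¹ * S).PosDef := by
    simpa only [star_eq_conjTranspose, hS.1.eq] using
      (IsUnit.posDef_star_left_conjugate_iff hS.isUnit).2 hX.inv
  rw [hY, det_add_mul _ _ hX.det_pos.ne'.isUnit]
  exact lt_mul_of_one_lt_right hX.det_pos hK.one_lt_det_one_add

end Matrix

theorem det_lyapunov_ratio_strict_anti_general {m : ℕ} (hm : 0 < m)
    (Q F P₁ P₂ : Matrix (Fin m) (Fin m) ℝ)
    (hQ : Q.PosDef) (hP₂ : P₂.PosDef)
    (h12 : (P₁ - P₂).PosDef) :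
    (F * P₁ * Fᵀ + Q).det / P₁.det < (F * P₂ * Fᵀ + Q).det / P₂.det := by
  have : Nonempty (Fin m) := ⟨⟨0, hm⟩⟩
  have hP₁ : P₁.PosDef := by simpa using hP₂.add h12
  have hC : (Fᵀ * Q⁻¹ * F).PosSemidef := by
    simpa using hQ.inv.posSemidef.conjTranspose_mul_mul_same F
  have hdet : (P₁⁻¹ + Fᵀ * Q⁻¹ * F).det < (P₂⁻¹ + Fᵀ * Q⁻¹ * F).det :=
    (hP₁.inv.add_posSemidef hC).det_lt_det (by simpa using hP₂.inv_sub_inv h12)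
  rw [det_mul_mul_transpose_add F hP₁.det_pos.ne'.isUnit hQ.det_pos.ne'.isUnit,
    det_mul_mul_transpose_add F hP₂.det_pos.ne'.isUnit hQ.det_pos.ne'.isUnit,
    mul_div_cancel_right₀ _ hP₁.det_pos.ne', mul_div_cancel_right₀ _ hP₂.det_pos.ne']
  exact mul_lt_mul_of_pos_left hdet hQ.det_pos

/-- The ratio `det(F P Fᵀ + Q) / det(P)` is strictly decreasing in `P`
with respect to the Loewner order: if `P₁ ≻ P₂ ≻ 0`, then
`det(F P₁ Fᵀ + Q) / det(P₁) < det(F P₂ Fᵀ + Q) / det(P₂)`. -/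
theorem det_lyapunov_ratio_strict_anti {m : ℕ} (hm : 0 < m)
    (Q F P₁ P₂ : Matrix (Fin m) (Fin m) ℝ)
    (hQ : Q.PosDef) (hP₁ : P₁.IsHermitian) (hP₂ : P₂.PosDef)
    (h12 : (P₁ - P₂).PosDef) :
    (F * P₁ * Fᵀ + Q).det / P₁.det < (F * P₂ * Fᵀ + Q).det / P₂.det :=
  det_lyapunov_ratio_strict_anti_general hm Q F P₁ P₂ hQ hP₂ h12
end

section
/- Let P and Q be m×m real symmetric positive definite matrices, R a p×p real symmetric positive definite matrix, F an m×m real matrix and H a p×m real matrix. Then det(F P Fᵀ − F P Hᵀ (H P Hᵀ + R)⁻¹ H P Fᵀ + Q) / det(P) = det(Q) · det(R) · det(P⁻¹ + Hᵀ R⁻¹ H + Fᵀ Q⁻¹ F) / det(R + H P Hᵀ). -/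
/-!
Put `M = P⁻¹ + Hᵀ R⁻¹ H`. By the Woodbury identity `M⁻¹ = P - P Hᵀ (H P Hᵀ + R)⁻¹ H P`, so the
matrix in the numerator is `Q + F M⁻¹ Fᵀ`. The generalized matrix determinant lemma
`det (A + U C V) = det A · det C · det (C⁻¹ + V A⁻¹ U)` gives both
`det (Q + F M⁻¹ Fᵀ) = det Q · det M⁻¹ · det (M + Fᵀ Q⁻¹ F)` and
`det (R + H P Hᵀ) = det R · det P · det M`, and the two sides agree.
-/

open Matrix

namespace Matrix

variable {n k α : Type*} [Fintype n] [DecidableEq n] [Fintype k] [DecidableEq k] [CommRing α]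

theorem det_add_mul_mul (A : Matrix n n α) (U : Matrix n k α) (C : Matrix k k α)
    (V : Matrix k n α) (hA : IsUnit A.det) (hC : IsUnit C.det) :
    (A + U * C * V).det = A.det * C.det * (C⁻¹ + V * A⁻¹ * U).det := by
  have hfactor : 1 + V * A⁻¹ * (U * C) = (C⁻¹ + V * A⁻¹ * U) * C := by
    rw [Matrix.add_mul, C.nonsing_inv_mul hC]
    simp only [Matrix.mul_assoc]
  rw [det_add_mul _ _ hA, hfactor, det_mul]
  ring

theorem inv_add_transpose_mul_inv_mul_eq_sub (P : Matrix n n α) (R : Matrix k k α)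
    (H : Matrix k n α) (hP : IsUnit P.det) (hR : IsUnit R.det)
    (hS : IsUnit (H * P * Hᵀ + R).det) :
    (P⁻¹ + Hᵀ * R⁻¹ * H)⁻¹ = P - P * Hᵀ * (H * P * Hᵀ + R)⁻¹ * H * P := by
  have hPinv : P⁻¹⁻¹ = P := P.nonsing_inv_nonsing_inv hP
  have hRinv : R⁻¹⁻¹ = R := R.nonsing_inv_nonsing_inv hR
  have woodbury := add_mul_mul_inv_eq_sub P⁻¹ Hᵀ R⁻¹ H
    (isUnit_nonsing_inv_iff.mpr ((isUnit_iff_isUnit_det P).mpr hP))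
    (isUnit_nonsing_inv_iff.mpr ((isUnit_iff_isUnit_det R).mpr hR))
    (by rw [hPinv, hRinv, add_comm]; exact (isUnit_iff_isUnit_det _).mpr hS)
  rw [woodbury, hPinv, hRinv, add_comm R]

end Matrix

/-- For symmetric positive definite `P`, `Q`, `R` and arbitrary `F`, `H`:
`det(F P Fᵀ − F P Hᵀ (H P Hᵀ + R)⁻¹ H P Fᵀ + Q) / det(P)
  = det(Q) det(R) det(P⁻¹ + Hᵀ R⁻¹ H + Fᵀ Q⁻¹ F) / det(R + H P Hᵀ)`. -/
theorem det_riccati_ratio {m p : ℕ}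
    (P Q F : Matrix (Fin m) (Fin m) ℝ)
    (R : Matrix (Fin p) (Fin p) ℝ) (H : Matrix (Fin p) (Fin m) ℝ)
    (hP : P.PosDef) (hQ : Q.PosDef) (hR : R.PosDef) :
    (F * P * Fᵀ - F * P * Hᵀ * (H * P * Hᵀ + R)⁻¹ * H * P * Fᵀ + Q).det / P.det
      = Q.det * R.det * (P⁻¹ + Hᵀ * R⁻¹ * H + Fᵀ * Q⁻¹ * F).det / (R + H * P * Hᵀ).det := by
  set M := P⁻¹ + Hᵀ * R⁻¹ * H
  have hS : (R + H * P * Hᵀ).PosDef := by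
    simpa using hR.add_posSemidef (hP.posSemidef.mul_mul_conjTranspose_same H)
  have hdetS : (R + H * P * Hᵀ).det = R.det * P.det * M.det :=
    det_add_mul_mul R H P Hᵀ hR.det_pos.ne'.isUnit hP.det_pos.ne'.isUnit
  have hM : M.det ≠ 0 := fun h ↦ hS.det_pos.ne' (by rw [hdetS, h, mul_zero])
  have hnum : F * P * Fᵀ - F * P * Hᵀ * (H * P * Hᵀ + R)⁻¹ * H * P * Fᵀ + Q
      = Q + F * M⁻¹ * Fᵀ := by
    rw [inv_add_transpose_mul_inv_mul_eq_sub P R H hP.det_pos.ne'.isUnit hR.det_pos.ne'.isUnit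
      (by rw [add_comm]; exact hS.det_pos.ne'.isUnit)]
    simp only [Matrix.mul_sub, Matrix.sub_mul, Matrix.mul_assoc]
    abel
  have hdetnum : (Q + F * M⁻¹ * Fᵀ).det = Q.det * M⁻¹.det * (M + Fᵀ * Q⁻¹ * F).det := by
    rw [det_add_mul_mul Q F M⁻¹ Fᵀ hQ.det_pos.ne'.isUnit
      (isUnit_nonsing_inv_det M hM.isUnit),
      M.nonsing_inv_nonsing_inv hM.isUnit]
  rw [hnum, hdetnum, hdetS, det_nonsing_inv, Ring.inverse_eq_inv]
  field_simp [hP.det_pos.ne', hR.det_pos.ne']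
end

section
/- Let Q be an m×m real symmetric positive definite matrix, R a p×p real symmetric positive definite matrix, F an m×m real matrix and H a p×m real matrix. Let P₁, P₂ be m×m real symmetric matrices with P₁ ≻ P₂ ≻ 0. Then det(F P₁ Fᵀ − F P₁ Hᵀ (H P₁ Hᵀ + R)⁻¹ H P₁ Fᵀ + Q) / det(P₁) < det(F P₂ Fᵀ − F P₂ Hᵀ (H P₂ Hᵀ + R)⁻¹ H P₂ Fᵀ + Q) / det(P₂). In other words, the ratio det(R₁(P))/det(P) for the Riccati update R₁(P) = F P Fᵀ + Q − F P Hᵀ (H P Hᵀ + R)⁻¹ H P Fᵀ is strictly decreasing in P with respect to the Loewner order. -/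
/-!
In information form `X = P⁻¹`, with `M = Hᵀ R⁻¹ H` and `N = Fᵀ Q⁻¹ F`, the Woodbury identity and
the matrix determinant lemma give `det R₁(P) / det P = det Q · det X · det (X + M + N) / det (X + M)`.
Write `P₂⁻¹ = P₁⁻¹ + D` with `D = Bᴴ B ≻ 0`. For `Y ≻ 0` the factor `det (Y + D) / det Y` equals
`det (1 + B Y⁻¹ Bᴴ)`, which is antitone in `Y` because inversion is; so this factor is smaller at
`Y = X + M` than at `Y = X`, and it exceeds `1` at `Y = X + M + N`.
-/

open Matrix

namespace Matrix

section

variable {K m k : Type*} [Fintype m] [DecidableEq m] [Fintype k] [DecidableEq k]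

lemma inv_sub_inv_add_eq [CommRing K] {A S : Matrix m m K} (hA : IsUnit A.det)
    (hAS : IsUnit (A + S).det) :
    A⁻¹ - (A + S)⁻¹ = (A + S)⁻¹ * (S + S * A⁻¹ * S) * (A + S)⁻¹ := by
  rw [inv_sub_inv (by simp [isUnit_iff_isUnit_det, hA, hAS]), add_sub_cancel_left]
  congr 1
  rw [← (A + S).nonsing_inv_mul_cancel_left (A⁻¹ * S) hAS, Matrix.add_mul, ← Matrix.mul_assoc,
    mul_nonsing_inv _ hA, Matrix.one_mul, Matrix.mul_assoc]

lemma inv_add_mul_inv_mul_inv_eq_sub [CommRing K] {P : Matrix m m K} {R : Matrix k k K}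
    (U : Matrix m k K) (V : Matrix k m K) (hP : IsUnit P.det) (hR : IsUnit R.det)
    (hVPU : IsUnit (V * P * U + R)) :
    (P⁻¹ + U * R⁻¹ * V)⁻¹ = P - P * U * (V * P * U + R)⁻¹ * V * P := by
  have hPP := nonsing_inv_nonsing_inv P hP
  have hRR := nonsing_inv_nonsing_inv R hR
  simpa only [hPP, hRR, add_comm R] using add_mul_mul_inv_eq_sub P⁻¹ U R⁻¹ V
    (isUnit_nonsing_inv_iff.mpr ((isUnit_iff_isUnit_det P).mpr hP))
    (isUnit_nonsing_inv_iff.mpr ((isUnit_iff_isUnit_det R).mpr hR))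
    (by rwa [hPP, hRR, add_comm])

lemma det_mul_inv_mul_add [Field K] {G : Matrix k k K} {Q : Matrix m m K}
    (U : Matrix m k K) (V : Matrix k m K) (hG : G.det ≠ 0) (hQ : Q.det ≠ 0) :
    (U * G⁻¹ * V + Q).det = Q.det * (G + V * Q⁻¹ * U).det / G.det := by
  have hfactor : 1 + G⁻¹ * V * Q⁻¹ * U = G⁻¹ * (G + V * Q⁻¹ * U) := by
    rw [Matrix.mul_add, nonsing_inv_mul _ hG.isUnit]
    simp only [Matrix.mul_assoc]
  rw [add_comm, Matrix.mul_assoc, det_add_mul _ _ hQ.isUnit, hfactor, det_mul, det_nonsing_inv,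
    Ring.inverse_eq_inv']
  ring

end

variable {n : Type*} [Fintype n] [DecidableEq n] {A S : Matrix n n ℝ}

lemma IsHermitian.det_one_add (hS : S.IsHermitian) :
    (1 + S).det = ∏ i, (1 + hS.eigenvalues i) := by
  conv_lhs =>
    rw [hS.spectral_theorem, ← map_one (Unitary.conjStarAlgAut ℝ _ hS.eigenvectorUnitary),
      ← map_add, Unitary.conjStarAlgAut_apply, det_mul_comm, ← Matrix.mul_assoc,
      Unitary.coe_star_mul_self, Matrix.one_mul]
  simp [← diagonal_one, diagonal_add, det_diagonal]

lemma PosSemidef.one_le_det_one_add (hS : S.PosSemidef) : 1 ≤ (1 + S).det := by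
  rw [hS.isHermitian.det_one_add]
  exact Finset.one_le_prod fun i _ => by linarith [hS.eigenvalues_nonneg i]

lemma PosDef.one_lt_det_one_add_s7 [Nonempty n] (hS : S.PosDef) : 1 < (1 + S).det := by
  rw [hS.isHermitian.det_one_add]
  simpa using Finset.prod_lt_prod_of_nonempty (f := fun _ => (1 : ℝ)) (fun _ _ => one_pos)
    (fun i _ => by linarith [hS.eigenvalues_pos i]) Finset.univ_nonempty

lemma PosSemidef.exists_eq_conjTranspose_mul_self (hS : S.PosSemidef) :
    ∃ B : Matrix n n ℝ, S = Bᴴ * B := by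
  open scoped MatrixOrder in
  exact ⟨CFC.sqrt S, by
    rw [(CFC.sqrt_nonneg S).posSemidef.isHermitian.eq, CFC.sqrt_mul_sqrt_self S hS.nonneg]⟩

lemma PosDef.det_le_det_add (hA : A.PosDef) (hS : S.PosSemidef) : A.det ≤ (A + S).det := by
  obtain ⟨B, rfl⟩ := hS.exists_eq_conjTranspose_mul_self
  rw [det_add_mul _ _ hA.det_pos.ne'.isUnit]
  exact le_mul_of_one_le_right hA.det_pos.le
    (hA.inv.posSemidef.mul_mul_conjTranspose_same B).one_le_det_one_add

lemma PosDef.det_lt_det_add [Nonempty n] (hA : A.PosDef) (hS : S.PosDef) :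
    A.det < (A + S).det := by
  obtain ⟨B, rfl⟩ := hS.posSemidef.exists_eq_conjTranspose_mul_self
  have hB : IsUnit B := by
    have := hS.det_pos.ne'
    rw [det_mul, det_conjTranspose] at this
    exact (isUnit_iff_isUnit_det B).mpr (right_ne_zero_of_mul this).isUnit
  rw [det_add_mul _ _ hA.det_pos.ne'.isUnit]
  exact lt_mul_of_one_lt_right hA.det_pos
    (hA.inv.mul_mul_conjTranspose_same (vecMul_injective_iff_isUnit.mpr hB)).one_lt_det_one_add_s7

lemma PosDef.posSemidef_inv_sub_inv_add (hA : A.PosDef) (hS : S.PosSemidef) :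
    (A⁻¹ - (A + S)⁻¹).PosSemidef := by
  have hAS := hA.add_posSemidef hS
  rw [inv_sub_inv_add_eq hA.det_pos.ne'.isUnit hAS.det_pos.ne'.isUnit]
  have hmid := hS.add (hA.inv.posSemidef.conjTranspose_mul_mul_same S)
  rw [hS.isHermitian.eq] at hmid
  simpa only [hAS.inv.isHermitian.eq] using hmid.mul_mul_conjTranspose_same (A + S)⁻¹

lemma PosDef.posDef_inv_sub_inv_add (hA : A.PosDef) (hS : S.PosDef) :
    (A⁻¹ - (A + S)⁻¹).PosDef := by
  have hAS := hA.add hS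
  rw [inv_sub_inv_add_eq hA.det_pos.ne'.isUnit hAS.det_pos.ne'.isUnit]
  have hmid := hS.add_posSemidef (hA.inv.posSemidef.conjTranspose_mul_mul_same S)
  rw [hS.isHermitian.eq] at hmid
  simpa only [hAS.inv.isHermitian.eq] using hmid.mul_mul_conjTranspose_same
    (vecMul_injective_iff_isUnit.mpr hAS.inv.isUnit)

lemma PosDef.det_add_add_div_det_add_le {Y M D : Matrix n n ℝ} (hY : Y.PosDef)
    (hM : M.PosSemidef) (hD : D.PosSemidef) :
    (Y + M + D).det / (Y + M).det ≤ (Y + D).det / Y.det := by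
  have hYM := hY.add_posSemidef hM
  obtain ⟨B, rfl⟩ := hD.exists_eq_conjTranspose_mul_self
  rw [det_add_mul _ _ hY.det_pos.ne'.isUnit, det_add_mul _ _ hYM.det_pos.ne'.isUnit,
    mul_div_cancel_left₀ _ hY.det_pos.ne', mul_div_cancel_left₀ _ hYM.det_pos.ne']
  have hsplit : 1 + B * Y⁻¹ * Bᴴ = 1 + B * (Y + M)⁻¹ * Bᴴ + B * (Y⁻¹ - (Y + M)⁻¹) * Bᴴ := by
    simp only [Matrix.mul_sub, Matrix.sub_mul]
    abel
  rw [hsplit]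
  exact (PosDef.one.add_posSemidef
    (hYM.inv.posSemidef.mul_mul_conjTranspose_same B)).det_le_det_add
      ((hY.posSemidef_inv_sub_inv_add hM).mul_mul_conjTranspose_same B)

lemma det_mul_det_div_det_lt_of_posDef_sub [Nonempty n] {X₁ X₂ M N : Matrix n n ℝ}
    (hX₁ : X₁.PosDef) (h12 : (X₂ - X₁).PosDef) (hM : M.PosSemidef) (hN : N.PosSemidef) :
    X₁.det * (X₁ + M + N).det / (X₁ + M).det < X₂.det * (X₂ + M + N).det / (X₂ + M).det := by
  obtain ⟨D, hD, rfl⟩ : ∃ D, D.PosDef ∧ X₂ = X₁ + D := ⟨X₂ - X₁, h12, by abel⟩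
  have hX₁M := hX₁.add_posSemidef hM
  have hX₁MN := hX₁M.add_posSemidef hN
  have hratio := hX₁.det_add_add_div_det_add_le hM hD.posSemidef
  rw [div_le_div_iff₀ hX₁M.det_pos hX₁.det_pos] at hratio
  rw [add_right_comm X₁ D, add_right_comm (X₁ + M) D,
    div_lt_div_iff₀ hX₁M.det_pos (hX₁M.add hD).det_pos]
  calc X₁.det * (X₁ + M + N).det * (X₁ + M + D).det
      = (X₁ + M + N).det * ((X₁ + M + D).det * X₁.det) := by ring
    _ ≤ (X₁ + M + N).det * ((X₁ + D).det * (X₁ + M).det) := by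
      gcongr; exact hX₁MN.det_pos.le
    _ < (X₁ + M + N + D).det * ((X₁ + D).det * (X₁ + M).det) := by
      gcongr
      · exact mul_pos (hX₁.add hD).det_pos hX₁M.det_pos
      · exact hX₁MN.det_lt_det_add hD
    _ = (X₁ + D).det * (X₁ + M + N + D).det * (X₁ + M).det := by ring

end Matrix

lemma det_riccati_div_det {m k : Type*} [Fintype m] [DecidableEq m] [Fintype k] [DecidableEq k]
    {Q F P : Matrix m m ℝ} {R : Matrix k k ℝ} {H : Matrix k m ℝ}
    (hQ : Q.PosDef) (hR : R.PosDef) (hP : P.PosDef) :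
    (F * P * Fᵀ - F * P * Hᵀ * (H * P * Hᵀ + R)⁻¹ * H * P * Fᵀ + Q).det / P.det =
      Q.det * (P⁻¹.det * (P⁻¹ + Hᵀ * R⁻¹ * H + Fᵀ * Q⁻¹ * F).det /
        (P⁻¹ + Hᵀ * R⁻¹ * H).det) := by
  have hG : (P⁻¹ + Hᵀ * R⁻¹ * H).PosDef := by
    simpa only [conjTranspose_eq_transpose_of_trivial] using
      hP.inv.add_posSemidef (hR.inv.posSemidef.conjTranspose_mul_mul_same H)
  have hHPH : (H * P * Hᵀ + R).PosDef := by
    simpa only [conjTranspose_eq_transpose_of_trivial] using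
      hR.posSemidef_add (hP.posSemidef.mul_mul_conjTranspose_same H)
  have hgain : F * P * Fᵀ - F * P * Hᵀ * (H * P * Hᵀ + R)⁻¹ * H * P * Fᵀ
      = F * (P⁻¹ + Hᵀ * R⁻¹ * H)⁻¹ * Fᵀ := by
    rw [inv_add_mul_inv_mul_inv_eq_sub _ _ hP.det_pos.ne'.isUnit hR.det_pos.ne'.isUnit
      hHPH.isUnit]
    simp only [Matrix.mul_sub, Matrix.sub_mul, Matrix.mul_assoc]
  rw [hgain, det_mul_inv_mul_add _ _ hG.det_pos.ne' hQ.det_pos.ne', det_nonsing_inv,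
    Ring.inverse_eq_inv']
  ring

theorem det_riccati_ratio_strict_anti_general {m p : ℕ} (hm : 0 < m)
    (Q F P₁ P₂ : Matrix (Fin m) (Fin m) ℝ)
    (R : Matrix (Fin p) (Fin p) ℝ) (H : Matrix (Fin p) (Fin m) ℝ)
    (hQ : Q.PosDef) (hR : R.PosDef)
    (hP₂ : P₂.PosDef) (h12 : (P₁ - P₂).PosDef) :
    (F * P₁ * Fᵀ - F * P₁ * Hᵀ * (H * P₁ * Hᵀ + R)⁻¹ * H * P₁ * Fᵀ + Q).det / P₁.det
      < (F * P₂ * Fᵀ - F * P₂ * Hᵀ * (H * P₂ * Hᵀ + R)⁻¹ * H * P₂ * Fᵀ + Q).det / P₂.det := by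
  have : Nonempty (Fin m) := ⟨⟨0, hm⟩⟩
  have hP₁ : P₁.PosDef := by simpa using h12.add hP₂
  have hinv : (P₂⁻¹ - P₁⁻¹).PosDef := by simpa using hP₂.posDef_inv_sub_inv_add h12
  rw [det_riccati_div_det hQ hR hP₁, det_riccati_div_det hQ hR hP₂]
  exact mul_lt_mul_of_pos_left (det_mul_det_div_det_lt_of_posDef_sub hP₁.inv hinv
    (hR.inv.posSemidef.conjTranspose_mul_mul_same H)
    (hQ.inv.posSemidef.conjTranspose_mul_mul_same F)) hQ.det_pos

/-- The ratio `det(R₁(P)) / det(P)` for the Riccati update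
`R₁(P) = F P Fᵀ + Q − F P Hᵀ (H P Hᵀ + R)⁻¹ H P Fᵀ` is strictly decreasing in `P`
with respect to the Loewner order. -/
theorem det_riccati_ratio_strict_anti {m p : ℕ} (hm : 0 < m)
    (Q F P₁ P₂ : Matrix (Fin m) (Fin m) ℝ)
    (R : Matrix (Fin p) (Fin p) ℝ) (H : Matrix (Fin p) (Fin m) ℝ)
    (hQ : Q.PosDef) (hR : R.PosDef)
    (hP₁ : P₁.IsHermitian) (hP₂ : P₂.PosDef) (h12 : (P₁ - P₂).PosDef) :
    (F * P₁ * Fᵀ - F * P₁ * Hᵀ * (H * P₁ * Hᵀ + R)⁻¹ * H * P₁ * Fᵀ + Q).det / P₁.det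
      < (F * P₂ * Fᵀ - F * P₂ * Hᵀ * (H * P₂ * Hᵀ + R)⁻¹ * H * P₂ * Fᵀ + Q).det / P₂.det :=
  det_riccati_ratio_strict_anti_general hm Q F P₁ P₂ R H hQ hR hP₂ h12
end

section
/- Let Q be an m×m real symmetric positive semidefinite matrix, R a p×p real symmetric positive definite matrix, F an m×m real matrix and H a p×m real matrix. The Lyapunov update L(P) = F P Fᵀ + Q and the Riccati update R₁(P) = F P Fᵀ + Q − F P Hᵀ (H P Hᵀ + R)⁻¹ H P Fᵀ are monotone operators with respect to the Loewner order on real symmetric positive semidefinite matrices: if P₁ ⪰ P₂ ⪰ 0, then L(P₁) ⪰ L(P₂) and R₁(P₁) ⪰ R₁(P₂). -/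
/-!
The Lyapunov part is `F (P₁ - P₂) Fᵀ ⪰ 0`. For the Riccati part write `R₁(P) = F P⁺ Fᵀ + Q` with
the measurement update `P⁺ = P - K H P`, gain `K = P Hᵀ S⁻¹` and `S = H P Hᵀ + R ≻ 0`.
Completing the square in the gain turns the Joseph form into
`(1 - K' H) P (1 - K' H)ᵀ + K' R K'ᵀ = P⁺ + (K' - K) S (K' - K)ᵀ` for every `K'`.
Evaluating this at `P₁` and at `P₂` with the same gain `K₁` of `P₁` and subtracting gives
`P₁⁺ - P₂⁺ = (1 - K₁ H) (P₁ - P₂) (1 - K₁ H)ᵀ + (K₁ - K₂) S₂ (K₁ - K₂)ᵀ ⪰ 0`.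
-/

open Matrix

namespace Matrix

variable {m n : Type*} [Fintype m] [Fintype n]

theorem PosSemidef.mul_mul_transpose_same {A : Matrix n n ℝ} (hA : A.PosSemidef)
    (B : Matrix m n ℝ) : (B * A * Bᵀ).PosSemidef := by
  simpa only [conjTranspose_eq_transpose_of_trivial] using hA.mul_mul_conjTranspose_same B

omit [Fintype m] [Fintype n] in
theorem PosSemidef.transpose_eq {A : Matrix n n ℝ} (hA : A.PosSemidef) : Aᵀ = A := by
  simpa only [IsHermitian, conjTranspose_eq_transpose_of_trivial] using hA.isHermitian

end Matrix

namespace Kalman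

variable {m n α : Type*} [Fintype m] [Fintype n] [DecidableEq m] [CommRing α]

def timeUpdate (F Q P : Matrix n n α) : Matrix n n α :=
  F * P * Fᵀ + Q

noncomputable def gain (H : Matrix m n α) (R : Matrix m m α) (P : Matrix n n α) : Matrix n m α :=
  P * Hᵀ * (H * P * Hᵀ + R)⁻¹

noncomputable def measurementUpdate (H : Matrix m n α) (R : Matrix m m α) (P : Matrix n n α) :
    Matrix n n α :=
  P - gain H R P * H * P

variable {H : Matrix m n α} {R : Matrix m m α} {P : Matrix n n α}

theorem gain_mul (hS : IsUnit (H * P * Hᵀ + R).det) :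
    gain H R P * (H * P * Hᵀ + R) = P * Hᵀ := by
  rw [gain, Matrix.mul_assoc, nonsing_inv_mul _ hS, Matrix.mul_one]

theorem mul_transpose_gain (hP : Pᵀ = P) (hR : Rᵀ = R) (hS : IsUnit (H * P * Hᵀ + R).det) :
    (H * P * Hᵀ + R) * (gain H R P)ᵀ = H * P := by
  have hSt : (H * P * Hᵀ + R)ᵀ = H * P * Hᵀ + R := by
    rw [transpose_add, transpose_mul, transpose_mul, transpose_transpose, hP, hR,
      Matrix.mul_assoc]
  rw [gain, transpose_mul, transpose_nonsing_inv, hSt, ← Matrix.mul_assoc,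
    mul_nonsing_inv _ hS, Matrix.one_mul, transpose_mul, transpose_transpose, hP]

theorem timeUpdate_measurementUpdate (F Q : Matrix n n α) :
    timeUpdate F Q (measurementUpdate H R P) =
      F * P * Fᵀ + Q - F * P * Hᵀ * (H * P * Hᵀ + R)⁻¹ * H * P * Fᵀ := by
  simp only [timeUpdate, measurementUpdate, gain, Matrix.mul_sub, Matrix.sub_mul,
    Matrix.mul_assoc]
  abel

omit [DecidableEq m] in
theorem timeUpdate_sub_timeUpdate_posSemidef {P₁ P₂ : Matrix n n ℝ} (F Q : Matrix n n ℝ)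
    (h : (P₁ - P₂).PosSemidef) : (timeUpdate F Q P₁ - timeUpdate F Q P₂).PosSemidef := by
  have hsub : timeUpdate F Q P₁ - timeUpdate F Q P₂ = F * (P₁ - P₂) * Fᵀ := by
    rw [timeUpdate, timeUpdate, Matrix.mul_sub, Matrix.sub_mul]
    abel
  exact hsub ▸ h.mul_mul_transpose_same F

variable [DecidableEq n]

theorem joseph_eq (hP : Pᵀ = P) (hR : Rᵀ = R) (hS : IsUnit (H * P * Hᵀ + R).det)
    (K : Matrix n m α) :
    (1 - K * H) * P * (1 - K * H)ᵀ + K * R * Kᵀ =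
      measurementUpdate H R P + (K - gain H R P) * (H * P * Hᵀ + R) * (K - gain H R P)ᵀ := by
  set S := H * P * Hᵀ + R
  set G := gain H R P
  calc (1 - K * H) * P * (1 - K * H)ᵀ + K * R * Kᵀ
      = P - K * (H * P) - P * Hᵀ * Kᵀ + K * S * Kᵀ := by
        simp only [S, transpose_sub, transpose_one, transpose_mul, Matrix.sub_mul,
          Matrix.mul_sub, Matrix.add_mul, Matrix.mul_add, Matrix.one_mul, Matrix.mul_one,
          Matrix.mul_assoc]
        abel
    _ = P - K * (S * Gᵀ) - G * S * Kᵀ + K * S * Kᵀ := by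
        rw [gain_mul hS, mul_transpose_gain hP hR hS]
    _ = P - G * (S * Gᵀ) + (K - G) * S * (K - G)ᵀ := by
        simp only [transpose_sub, Matrix.sub_mul, Matrix.mul_sub, Matrix.mul_assoc]
        abel
    _ = measurementUpdate H R P + (K - G) * S * (K - G)ᵀ := by
        rw [mul_transpose_gain hP hR hS, measurementUpdate, Matrix.mul_assoc G]

theorem measurementUpdate_sub_measurementUpdate_eq {P₁ P₂ : Matrix n n α}
    (hP₁ : P₁ᵀ = P₁) (hP₂ : P₂ᵀ = P₂) (hR : Rᵀ = R)
    (hS₁ : IsUnit (H * P₁ * Hᵀ + R).det) (hS₂ : IsUnit (H * P₂ * Hᵀ + R).det) :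
    measurementUpdate H R P₁ - measurementUpdate H R P₂ =
      (1 - gain H R P₁ * H) * (P₁ - P₂) * (1 - gain H R P₁ * H)ᵀ +
        (gain H R P₁ - gain H R P₂) * (H * P₂ * Hᵀ + R) * (gain H R P₁ - gain H R P₂)ᵀ := by
  have h₁ := joseph_eq hP₁ hR hS₁ (gain H R P₁)
  have h₂ := joseph_eq hP₂ hR hS₂ (gain H R P₁)
  rw [sub_self, Matrix.zero_mul, Matrix.zero_mul, add_zero] at h₁
  rw [Matrix.mul_sub, Matrix.sub_mul, ← h₁, eq_sub_of_add_eq h₂.symm]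
  abel

theorem measurementUpdate_sub_measurementUpdate_posSemidef {H : Matrix m n ℝ}
    {R : Matrix m m ℝ} {P₁ P₂ : Matrix n n ℝ} (hR : R.PosDef) (hP₂ : P₂.PosSemidef)
    (h : (P₁ - P₂).PosSemidef) :
    (measurementUpdate H R P₁ - measurementUpdate H R P₂).PosSemidef := by
  have hP₁ : P₁.PosSemidef := by simpa using hP₂.add h
  have hS₁ : (H * P₁ * Hᵀ + R).PosDef := hR.posSemidef_add (hP₁.mul_mul_transpose_same H)
  have hS₂ : (H * P₂ * Hᵀ + R).PosDef := hR.posSemidef_add (hP₂.mul_mul_transpose_same H)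
  rw [measurementUpdate_sub_measurementUpdate_eq hP₁.transpose_eq hP₂.transpose_eq
    hR.posSemidef.transpose_eq hS₁.det_pos.ne'.isUnit hS₂.det_pos.ne'.isUnit]
  exact (h.mul_mul_transpose_same _).add (hS₂.posSemidef.mul_mul_transpose_same _)

end Kalman

theorem lyapunov_riccati_monotone_general {m p : ℕ}
    (Q F P₁ P₂ : Matrix (Fin m) (Fin m) ℝ)
    (R : Matrix (Fin p) (Fin p) ℝ) (H : Matrix (Fin p) (Fin m) ℝ)
    (hR : R.PosDef)
    (hP₂ : P₂.PosSemidef) (h12 : (P₁ - P₂).PosSemidef) :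
    ((F * P₁ * Fᵀ + Q) - (F * P₂ * Fᵀ + Q)).PosSemidef ∧
      ((F * P₁ * Fᵀ + Q - F * P₁ * Hᵀ * (H * P₁ * Hᵀ + R)⁻¹ * H * P₁ * Fᵀ)
        - (F * P₂ * Fᵀ + Q - F * P₂ * Hᵀ * (H * P₂ * Hᵀ + R)⁻¹ * H * P₂ * Fᵀ)).PosSemidef := by
  refine ⟨Kalman.timeUpdate_sub_timeUpdate_posSemidef F Q h12, ?_⟩
  rw [← Kalman.timeUpdate_measurementUpdate, ← Kalman.timeUpdate_measurementUpdate]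
  exact Kalman.timeUpdate_sub_timeUpdate_posSemidef F Q
    (Kalman.measurementUpdate_sub_measurementUpdate_posSemidef hR hP₂ h12)

/-- The Lyapunov update `L(P) = F P Fᵀ + Q` and the Riccati update
`R₁(P) = F P Fᵀ + Q − F P Hᵀ (H P Hᵀ + R)⁻¹ H P Fᵀ` are monotone with respect to
the Loewner order on positive semidefinite matrices: if `P₁ ⪰ P₂ ⪰ 0` then
`L(P₁) ⪰ L(P₂)` and `R₁(P₁) ⪰ R₁(P₂)`. -/
theorem lyapunov_riccati_monotone {m p : ℕ}
    (Q F P₁ P₂ : Matrix (Fin m) (Fin m) ℝ)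
    (R : Matrix (Fin p) (Fin p) ℝ) (H : Matrix (Fin p) (Fin m) ℝ)
    (hQ : Q.PosSemidef) (hR : R.PosDef)
    (hP₂ : P₂.PosSemidef) (h12 : (P₁ - P₂).PosSemidef) :
    ((F * P₁ * Fᵀ + Q) - (F * P₂ * Fᵀ + Q)).PosSemidef ∧
      ((F * P₁ * Fᵀ + Q - F * P₁ * Hᵀ * (H * P₁ * Hᵀ + R)⁻¹ * H * P₁ * Fᵀ)
        - (F * P₂ * Fᵀ + Q - F * P₂ * Hᵀ * (H * P₂ * Hᵀ + R)⁻¹ * H * P₂ * Fᵀ)).PosSemidef :=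
  lyapunov_riccati_monotone_general Q F P₁ P₂ R H hR hP₂ h12
end
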